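/- Let f, g be proper convex lower semicontinuous functions on a real Hilbert space H with zer(∂f+∂g) nonempty, and let (y^k), (x^k), (w^k) be generated by the inertial Douglas–Rachford iteration (2.5) with parameters satisfying 0 ≤ α_k ≤ α < 1, 0 < λ̲ ≤ λ_k ≤ λ̄ < 2 and Σ_k α_k‖w^k − w^{k−1}‖² < +∞. If moreover ∂f is uniformly monotone, i.e. there exists an increasing function φ : [0,+∞) → [0,+∞] with φ(t) = 0 only for t = 0 such that ⟨x − y, u − v⟩ ≥ φ(‖x − y‖) whenever u ∈ ∂f(x) and v ∈ ∂f(y), then zer(∂f+∂g) consists of a single point z, and both (y^k) and (x^k) converge strongly (in norm) to z. -/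

import Mathlib

open Filter Topology Pointwise
open scoped RealInnerProductSpace

noncomputable section

/-- `f` is proper, convex and lower semicontinuous (extended-real-valued). -/
def ProperConvexLSC {H : Type*} [NormedAddCommGroup H] [InnerProductSpace ℝ H]
    (f : H → EReal) : Prop :=
  (∀ x, f x ≠ ⊥) ∧ (∃ x, f x ≠ ⊤) ∧
    (∀ x y : H, ∀ a b : ℝ, 0 ≤ a → 0 ≤ b → a + b = 1 →
      f (a • x + b • y) ≤ (a : EReal) * f x + (b : EReal) * f y) ∧
    LowerSemicontinuous f

/-- The convex subdifferential `∂f(x)`. -/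
def subdiff {H : Type*} [NormedAddCommGroup H] [InnerProductSpace ℝ H]
    (f : H → EReal) (x : H) : Set H :=
  {w | ∀ z, f x + ((⟪w, z - x⟫ : ℝ) : EReal) ≤ f z}

/-- Weak convergence of a sequence in a Hilbert space. -/
def WeakTendsto {H : Type*} [NormedAddCommGroup H] [InnerProductSpace ℝ H]
    (x : ℕ → H) (l : H) : Prop :=
  ∀ z : H, Tendsto (fun k => ⟪x k, z⟫) atTop (𝓝 (⟪l, z⟫))

/-- `p` is the proximal point of parameter `γ` of `f` at `c`, i.e. the
minimizer of `z ↦ γ f(z) + (1/2)‖z - c‖²`. -/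
def IsProx {H : Type*} [NormedAddCommGroup H] [InnerProductSpace ℝ H]
    (γ : ℝ) (f : H → EReal) (c p : H) : Prop :=
  ∀ z, (γ : EReal) * f p + ((1 / 2 * ‖p - c‖ ^ 2 : ℝ) : EReal)
      ≤ (γ : EReal) * f z + ((1 / 2 * ‖z - c‖ ^ 2 : ℝ) : EReal)

/-!
Pick a zero `z` with `v ∈ ∂g(z)`, `-v ∈ ∂f(z)`, and put `w* = z + γ v`. Since the prox steps give
`(ŵᵏ - yᵏ)/γ ∈ ∂g(yᵏ)` and `uᵏ = (2yᵏ - ŵᵏ - xᵏ)/γ ∈ ∂f(xᵏ)` (with `ŵᵏ` the extrapolated point),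
monotonicity of `∂g` turns one relaxed step into
`‖wᵏ⁺¹ - w*‖² ≤ ‖ŵᵏ - w*‖² - λₖ(2 - λₖ)‖xᵏ - yᵏ‖² - 2λₖγ⟪xᵏ - z, uᵏ + v⟫`.
Expanding `‖ŵᵏ - w*‖²` yields an inertial descent inequality for `‖wᵏ - w*‖²`, and the
Alvarez–Attouch argument makes the residuals summable: `xᵏ - yᵏ → 0` and `⟪xᵏ - z, uᵏ + v⟫ → 0`.
By uniform monotonicity the latter dominates `φ(‖xᵏ - z‖)`, which forces `xᵏ → z`; the same
inequality between two zeros shows that the zero is unique.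
-/

theorem summable_of_le_mul_add {δ s : ℕ → ℝ} {q : ℝ} (hδ : ∀ k, 0 ≤ δ k) (hq0 : 0 ≤ q)
    (hq : q < 1) (hs : Summable s) (hs0 : ∀ k, 0 ≤ s k)
    (hrec : ∀ k, δ (k + 1) ≤ q * δ k + s k) : Summable δ := by
  refine summable_of_sum_range_le hδ (c := (δ 0 + ∑' k, s k) / (1 - q)) fun N => ?_
  induction N with
  | zero =>
    simpa using div_nonneg (add_nonneg (hδ 0) (tsum_nonneg hs0)) (by linarith)
  | succ N ih =>
    have hstep : ∑ k ∈ Finset.range N, δ (k + 1)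
        ≤ q * ∑ k ∈ Finset.range N, δ k + ∑ k ∈ Finset.range N, s k := by
      rw [Finset.mul_sum, ← Finset.sum_add_distrib]
      exact Finset.sum_le_sum fun k _ => hrec k
    have hS := hs.sum_le_tsum (Finset.range N) fun k _ => hs0 k
    have hfix : q * ((δ 0 + ∑' k, s k) / (1 - q)) + ∑' k, s k + δ 0
        = (δ 0 + ∑' k, s k) / (1 - q) := by
      field_simp [show 1 - q ≠ 0 by linarith]
      ring
    rw [Finset.sum_range_succ']
    nlinarith [mul_le_mul_of_nonneg_left ih hq0]

theorem summable_of_inertial_descent {h α s d : ℕ → ℝ} {q : ℝ} (hh : ∀ k, 0 ≤ h k)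
    (hα : ∀ k, 0 ≤ α k ∧ α k ≤ q) (hq : q < 1) (hs : Summable s) (hs0 : ∀ k, 0 ≤ s k)
    (hd : ∀ k, 0 ≤ d k)
    (hrec : ∀ k, h (k + 2) - h (k + 1) ≤ α k * (h (k + 1) - h k) + s k - d k) :
    Summable d := by
  set δ : ℕ → ℝ := fun k => max (h (k + 1) - h k) 0
  have hq0 : 0 ≤ q := (hα 0).1.trans (hα 0).2
  have hδ0 : ∀ k, 0 ≤ δ k := fun k => le_max_right _ _
  have hinertia : ∀ k, α k * (h (k + 1) - h k) ≤ q * δ k := fun k =>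
    (mul_le_mul_of_nonneg_left (le_max_left _ _) (hα k).1).trans
      (mul_le_mul_of_nonneg_right (hα k).2 (hδ0 k))
  have hδ : Summable δ := summable_of_le_mul_add hδ0 hq0 hq hs hs0 fun k =>
    max_le (by linarith [hrec k, hinertia k, hd k]) (by nlinarith [hδ0 k, hs0 k])
  have hrest : Summable fun k => q * δ k + s k := (hδ.mul_left q).add hs
  refine summable_of_sum_range_le hd (c := h 1 + ∑' k, (q * δ k + s k)) fun N => ?_
  calc ∑ k ∈ Finset.range N, d k
      ≤ ∑ k ∈ Finset.range N, ((h (k + 1) - h (k + 2)) + (q * δ k + s k)) :=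
        Finset.sum_le_sum fun k _ => by linarith [hrec k, hinertia k]
    _ = h 1 - h (N + 1) + ∑ k ∈ Finset.range N, (q * δ k + s k) := by
        rw [Finset.sum_add_distrib, Finset.sum_range_sub' (fun k => h (k + 1))]
    _ ≤ h 1 + ∑' k, (q * δ k + s k) := by
        have := hrest.sum_le_tsum (Finset.range N) fun k _ => by nlinarith [hδ0 k, hs0 k]
        linarith [hh (N + 1)]

theorem tendsto_zero_of_forcing_le {φ : ℝ → EReal} (hφmono : MonotoneOn φ (Set.Ici 0))
    (hφnonneg : ∀ t, 0 ≤ t → 0 ≤ φ t) (hφvanish : ∀ t, 0 ≤ t → φ t = 0 → t = 0)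
    {t c : ℕ → ℝ} (ht : ∀ k, 0 ≤ t k) (hφc : ∀ᶠ k in atTop, φ (t k) ≤ c k)
    (hc : Tendsto c atTop (𝓝 0)) : Tendsto t atTop (𝓝 0) := by
  refine tendsto_order.2 ⟨fun a ha => .of_forall fun k => ha.trans_le (ht k), fun ε hε => ?_⟩
  have hφε : 0 < φ ε :=
    (hφnonneg ε hε.le).lt_of_ne fun h => hε.ne' (hφvanish ε hε.le h.symm)
  obtain ⟨r, hr0, hrε⟩ := EReal.lt_iff_exists_real_btwn.1 hφε
  filter_upwards [hφc, (tendsto_order.1 hc).2 r (by exact_mod_cast hr0)] with k hφk hck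
  by_contra! hεk
  have : (r : EReal) < c k := hrε.trans_le ((hφmono hε.le (ht k) hεk).trans hφk)
  exact hck.not_gt (by exact_mod_cast this)

section Hilbert

variable {H : Type*} [NormedAddCommGroup H] [InnerProductSpace ℝ H] {f g : H → EReal}

theorem norm_add_smul_sub_sq (t : ℝ) (a b : H) :
    ‖a + t • (a - b)‖ ^ 2 = (1 + t) * ‖a‖ ^ 2 - t * ‖b‖ ^ 2 + t * (1 + t) * ‖a - b‖ ^ 2 := by
  simp only [← real_inner_self_eq_norm_sq, inner_add_left, inner_add_right, inner_sub_left,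
    inner_sub_right, real_inner_smul_left, real_inner_smul_right]
  ring

theorem douglasRachford_identity (γ : ℝ) (c x y z v : H) :
    ⟪c - (z + γ • v), x - y⟫ + ‖x - y‖ ^ 2 + ⟪x - z, (2 : ℝ) • y - c - x + γ • v⟫
      + ⟪y - z, c - y - γ • v⟫ = 0 := by
  simp only [← real_inner_self_eq_norm_sq, inner_add_left, inner_add_right, inner_sub_left,
    inner_sub_right, real_inner_smul_left, real_inner_smul_right]
  rw [real_inner_comm x c, real_inner_comm y c, real_inner_comm x z, real_inner_comm y z,
    real_inner_comm y x, real_inner_comm v x, real_inner_comm v y, real_inner_comm v z]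
  ring

theorem ne_top_of_mem_subdiff (hne : ∃ x, f x ≠ ⊤) {a u : H} (hu : u ∈ subdiff f a) :
    f a ≠ ⊤ := by
  obtain ⟨x₀, hx₀⟩ := hne
  intro htop
  have := hu x₀
  rw [htop, EReal.top_add_coe] at this
  exact hx₀ (top_le_iff.mp this)

theorem subdiff_monotone (hbot : ∀ x, f x ≠ ⊥) (hne : ∃ x, f x ≠ ⊤) {a b u v : H}
    (hu : u ∈ subdiff f a) (hv : v ∈ subdiff f b) : 0 ≤ ⟪a - b, u - v⟫ := by
  lift f a to ℝ using ⟨ne_top_of_mem_subdiff hne hu, hbot a⟩ with ra hra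
  lift f b to ℝ using ⟨ne_top_of_mem_subdiff hne hv, hbot b⟩ with rb hrb
  have hub := hu b
  have hva := hv a
  rw [← hra, ← hrb, ← EReal.coe_add, EReal.coe_le_coe_iff] at hub hva
  rw [← neg_sub a b, inner_neg_right] at hub
  rw [inner_sub_right, real_inner_comm u, real_inner_comm v]
  linarith

theorem IsProx.inv_smul_sub_mem_subdiff (hf : ProperConvexLSC f) {γ : ℝ} (hγ : 0 < γ)
    {c p : H} (hp : IsProx γ f c p) : γ⁻¹ • (c - p) ∈ subdiff f p := by
  obtain ⟨hbot, -, hconv, -⟩ := hf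
  intro z
  rcases eq_or_ne (f z) ⊤ with hz | hz
  · rw [hz]; exact le_top
  lift f z to ℝ using ⟨hz, hbot z⟩ with rz hrz
  have hp_top : f p ≠ ⊤ := by
    intro htop
    have := hp z
    rw [htop, ← hrz, EReal.coe_mul_top_of_pos hγ, EReal.top_add_coe, ← EReal.coe_mul,
      ← EReal.coe_add] at this
    exact EReal.coe_ne_top _ (top_le_iff.mp this)
  lift f p to ℝ using ⟨hp_top, hbot p⟩ with rp hrp
  have hsegment : ∀ t : ℝ, 0 < t → t < 1 →
      γ * (rp - rz) ≤ ⟪p - c, z - p⟫ + t / 2 * ‖z - p‖ ^ 2 := by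
    intro t ht0 ht1
    have hconv_t := hconv p z (1 - t) t (by linarith) ht0.le (by ring)
    rw [← hrp, ← hrz, ← EReal.coe_mul, ← EReal.coe_mul, ← EReal.coe_add] at hconv_t
    have hmin := (hp ((1 - t) • p + t • z)).trans
      (add_le_add_left (mul_le_mul_of_nonneg_left hconv_t (by exact_mod_cast hγ.le)) _)
    rw [← hrp, ← EReal.coe_mul, ← EReal.coe_mul, ← EReal.coe_add, ← EReal.coe_add,
      EReal.coe_le_coe_iff, show (1 - t) • p + t • z - c = (p - c) + t • (z - p) by module,
      norm_add_sq_real, norm_smul, real_inner_smul_right, mul_pow, Real.norm_eq_abs,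
      sq_abs] at hmin
    refine le_of_mul_le_mul_left ?_ ht0
    linarith
  have hlim : Tendsto (fun t : ℝ => ⟪p - c, z - p⟫ + t / 2 * ‖z - p‖ ^ 2) (𝓝[>] 0)
      (𝓝 ⟪p - c, z - p⟫) := by
    have : Continuous (fun t : ℝ => ⟪p - c, z - p⟫ + t / 2 * ‖z - p‖ ^ 2) := by fun_prop
    simpa using (this.tendsto 0).mono_left nhdsWithin_le_nhds
  have key : γ * (rp - rz) ≤ ⟪p - c, z - p⟫ :=
    ge_of_tendsto hlim (mem_of_superset (Ioo_mem_nhdsGT one_pos)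
      fun t ht => hsegment t ht.1 ht.2)
  rw [← EReal.coe_add, EReal.coe_le_coe_iff, real_inner_smul_left, ← neg_sub p c,
    inner_neg_left]
  have := mul_le_mul_of_nonneg_left key (inv_nonneg.2 hγ.le)
  rw [inv_mul_cancel_left₀ hγ.ne'] at this
  linarith

theorem douglasRachford_step_norm_sq_le (hg : ProperConvexLSC g) {γ : ℝ} (hγ : 0 < γ)
    {c x y z v : H} (hy : IsProx γ g c y) (hv : v ∈ subdiff g z) {μ : ℝ} (hμ : 0 ≤ μ) :
    ‖c + μ • (x - y) - (z + γ • v)‖ ^ 2 ≤ ‖c - (z + γ • v)‖ ^ 2 - μ * (2 - μ) * ‖x - y‖ ^ 2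
      - 2 * μ * ⟪x - z, (2 : ℝ) • y - c - x + γ • v⟫ := by
  have hmono : 0 ≤ ⟪y - z, c - y - γ • v⟫ := by
    have := subdiff_monotone hg.1 hg.2.1 (hy.inv_smul_sub_mem_subdiff hg hγ) hv
    rw [show c - y - γ • v = γ • (γ⁻¹ • (c - y) - v) by rw [smul_sub, smul_inv_smul₀ hγ.ne'],
      real_inner_smul_right]
    exact mul_nonneg hγ.le this
  rw [show c + μ • (x - y) - (z + γ • v) = (c - (z + γ • v)) + μ • (x - y) by abel,
    norm_add_sq_real, norm_smul, real_inner_smul_right, mul_pow, Real.norm_eq_abs, sq_abs]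
  linear_combination (2 * μ) * douglasRachford_identity γ c x y z v + 2 * mul_nonneg hμ hmono

theorem tendsto_inertialDR_residuals (hg : ProperConvexLSC g) {γ : ℝ} (hγ : 0 < γ) {z v : H}
    (hv : v ∈ subdiff g z) {α lam : ℕ → ℝ} {αbar llo lhi : ℝ}
    (hα : ∀ k, 0 ≤ α k ∧ α k ≤ αbar) (hαbar : αbar < 1)
    (hllo : 0 < llo) (hlam : ∀ k, llo ≤ lam k ∧ lam k ≤ lhi) (hlhi : lhi < 2)
    {w y x : ℕ → H}
    (hy : ∀ k, 1 ≤ k → IsProx γ g (w k + α k • (w k - w (k - 1))) (y k))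
    (hw : ∀ k, 1 ≤ k → w (k + 1) = w k + α k • (w k - w (k - 1)) + lam k • (x k - y k))
    (hsum : Summable fun k => α (k + 1) * ‖w (k + 1) - w k‖ ^ 2)
    (hgap : ∀ k, 1 ≤ k →
      0 ≤ ⟪x k - z, (2 : ℝ) • y k - (w k + α k • (w k - w (k - 1))) - x k + γ • v⟫) :
    Tendsto (fun k => ‖x k - y k‖) atTop (𝓝 0) ∧
      Tendsto (fun k => ⟪x k - z, (2 : ℝ) • y k - (w k + α k • (w k - w (k - 1))) - x k + γ • v⟫)
        atTop (𝓝 0) := by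
  set gap := fun k => ⟪x k - z, (2 : ℝ) • y k - (w k + α k • (w k - w (k - 1))) - x k + γ • v⟫
  set wstar := z + γ • v
  set c₁ := llo * (2 - lhi)
  have hc₁ : 0 < c₁ := mul_pos hllo (by linarith)
  set d := fun k => c₁ * ‖x (k + 1) - y (k + 1)‖ ^ 2 + 2 * llo * gap (k + 1)
  have hgap' : ∀ k, 0 ≤ gap (k + 1) := fun k => hgap (k + 1) le_add_self
  have hdescent : ∀ k, ‖w (k + 2) - wstar‖ ^ 2 - ‖w (k + 1) - wstar‖ ^ 2
      ≤ α (k + 1) * (‖w (k + 1) - wstar‖ ^ 2 - ‖w k - wstar‖ ^ 2)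
        + 2 * (α (k + 1) * ‖w (k + 1) - w k‖ ^ 2) - d k := by
    intro k
    obtain ⟨hα0, hα1⟩ := hα (k + 1)
    obtain ⟨hlam0, hlam1⟩ := hlam (k + 1)
    have hstep : ‖w (k + 2) - wstar‖ ^ 2 ≤ (1 + α (k + 1)) * ‖w (k + 1) - wstar‖ ^ 2
        - α (k + 1) * ‖w k - wstar‖ ^ 2 + α (k + 1) * (1 + α (k + 1)) * ‖w (k + 1) - w k‖ ^ 2
        - lam (k + 1) * (2 - lam (k + 1)) * ‖x (k + 1) - y (k + 1)‖ ^ 2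
        - 2 * lam (k + 1) * gap (k + 1) := by
      have := douglasRachford_step_norm_sq_le hg hγ (hy (k + 1) le_add_self) hv
        (x := x (k + 1)) (μ := lam (k + 1)) (by linarith)
      rwa [← hw (k + 1) le_add_self, Nat.add_sub_cancel,
        show w (k + 1) + α (k + 1) • (w (k + 1) - w k) - wstar
          = (w (k + 1) - wstar) + α (k + 1) • ((w (k + 1) - wstar) - (w k - wstar)) by
            rw [sub_sub_sub_cancel_right]; abel,
        norm_add_smul_sub_sq, sub_sub_sub_cancel_right] at this
    nlinarith [mul_nonneg (mul_nonneg hα0 (by linarith : 0 ≤ 1 - α (k + 1)))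
        (sq_nonneg ‖w (k + 1) - w k‖),
      mul_nonneg (add_nonneg (mul_nonneg (sub_nonneg.2 hlam0) (by linarith : 0 ≤ 2 - lam (k + 1)))
        (mul_nonneg hllo.le (sub_nonneg.2 hlam1))) (sq_nonneg ‖x (k + 1) - y (k + 1)‖),
      mul_nonneg (sub_nonneg.2 hlam0) (hgap' k)]
  have hd : Tendsto d atTop (𝓝 0) :=
    (summable_of_inertial_descent (h := fun k => ‖w k - wstar‖ ^ 2) (fun k => sq_nonneg _)
      (fun k => hα (k + 1)) hαbar (hsum.mul_left 2) (fun k => by have := (hα (k + 1)).1; positivity)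
      (fun k => by have := hgap' k; positivity) hdescent).tendsto_atTop_zero
  constructor
  · refine (tendsto_add_atTop_iff_nat 1).1 ?_
    have hsq : Tendsto (fun k => ‖x (k + 1) - y (k + 1)‖ ^ 2) atTop (𝓝 0) := by
      refine squeeze_zero (fun k => sq_nonneg _) (fun k => ?_) (by simpa using hd.div_const c₁)
      rw [le_div_iff₀' hc₁]
      exact le_add_of_nonneg_right (mul_nonneg (by positivity) (hgap' k))
    simpa [Real.sqrt_sq (norm_nonneg _)] using hsq.sqrt
  · refine (tendsto_add_atTop_iff_nat 1).1 <|
      squeeze_zero hgap' (fun k => ?_) (by simpa using hd.div_const (2 * llo))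
    rw [le_div_iff₀' (by positivity)]
    exact le_add_of_nonneg_left (by positivity)

theorem subsingleton_zer_of_uniformlyMonotone (hg_bot : ∀ x, g x ≠ ⊥) (hg_ne : ∃ x, g x ≠ ⊤)
    {φ : ℝ → EReal} (hφnonneg : ∀ t, 0 ≤ t → 0 ≤ φ t) (hφvanish : ∀ t, 0 ≤ t → φ t = 0 → t = 0)
    (hunif : ∀ a b u v : H, u ∈ subdiff f a → v ∈ subdiff f b →
      φ ‖a - b‖ ≤ ((⟪a - b, u - v⟫ : ℝ) : EReal)) :
    {a : H | ∃ u ∈ subdiff f a, ∃ v ∈ subdiff g a, u + v = 0}.Subsingleton := by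
  rintro a ⟨u, hu, v, hv, huv⟩ b ⟨u', hu', v', hv', huv'⟩
  have hφab : φ ‖a - b‖ ≤ 0 :=
    calc φ ‖a - b‖ ≤ ((⟪a - b, u - u'⟫ : ℝ) : EReal) := hunif a b u u' hu hu'
      _ = ((-⟪a - b, v - v'⟫ : ℝ) : EReal) := by
        rw [eq_neg_of_add_eq_zero_left huv, eq_neg_of_add_eq_zero_left huv', neg_sub_neg,
          ← neg_sub v v', inner_neg_right]
      _ ≤ 0 := by exact_mod_cast neg_nonpos.2 (subdiff_monotone hg_bot hg_ne hv hv')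
  have := hφvanish _ (norm_nonneg _) (le_antisymm hφab (hφnonneg _ (norm_nonneg _)))
  exact sub_eq_zero.1 (norm_eq_zero.1 this)

end Hilbert

theorem inertial_DR_strong_convergence_of_uniformly_monotone_general
    {H : Type*} [NormedAddCommGroup H] [InnerProductSpace ℝ H]
    (f g : H → EReal) (hf : ProperConvexLSC f) (hg : ProperConvexLSC g)
    (γ : ℝ) (hγ : 0 < γ)
    (proxf proxg : H → H)
    (hproxf : ∀ c, IsProx γ f c (proxf c)) (hproxg : ∀ c, IsProx γ g c (proxg c))
    (hzer : ∃ x : H, ∃ u ∈ subdiff f x, ∃ v ∈ subdiff g x, u + v = 0)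
    (α lam : ℕ → ℝ) (αbar llo lhi : ℝ)
    (hα : ∀ k, 0 ≤ α k ∧ α k ≤ αbar) (hαbar : αbar < 1)
    (hllo : 0 < llo) (hlam : ∀ k, llo ≤ lam k ∧ lam k ≤ lhi) (hlhi : lhi < 2)
    (w y x : ℕ → H)
    (hy : ∀ k, 1 ≤ k → y k = proxg (w k + α k • (w k - w (k - 1))))
    (hx : ∀ k, 1 ≤ k → x k = proxf ((2 : ℝ) • y k - w k - α k • (w k - w (k - 1))))
    (hw : ∀ k, 1 ≤ k → w (k + 1) = w k + α k • (w k - w (k - 1)) + lam k • (x k - y k))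
    (hsum : Summable fun k => α (k + 1) * ‖w (k + 1) - w k‖ ^ 2)
    (φ : ℝ → EReal) (hφmono : MonotoneOn φ (Set.Ici 0))
    (hφnonneg : ∀ t, 0 ≤ t → 0 ≤ φ t)
    (hφvanish : ∀ t, 0 ≤ t → φ t = 0 → t = 0)
    (hunif : ∀ a b u v : H, u ∈ subdiff f a → v ∈ subdiff f b →
      φ ‖a - b‖ ≤ ((⟪a - b, u - v⟫ : ℝ) : EReal)) :
    ∃ z : H,
      {a : H | ∃ u ∈ subdiff f a, ∃ v ∈ subdiff g a, u + v = 0} = {z} ∧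
      Tendsto (fun k => ‖y k - z‖) atTop (𝓝 0) ∧
      Tendsto (fun k => ‖x k - z‖) atTop (𝓝 0) := by
  obtain ⟨z, u, hu, v, hv, huv⟩ := hzer
  obtain rfl : u = -v := eq_neg_of_add_eq_zero_left huv
  have hφx : ∀ k, 1 ≤ k → φ ‖x k - z‖ ≤ ((γ⁻¹ *
      ⟪x k - z, (2 : ℝ) • y k - (w k + α k • (w k - w (k - 1))) - x k + γ • v⟫ : ℝ) : EReal) := by
    intro k hk
    have hsub := (hproxf ((2 : ℝ) • y k - w k - α k • (w k - w (k - 1)))).inv_smul_sub_mem_subdiff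
      hf hγ
    rw [← hx k hk] at hsub
    convert hunif _ _ _ _ hsub hu using 3
    rw [← real_inner_smul_right, smul_add, inv_smul_smul₀ hγ.ne', sub_neg_eq_add,
      ← sub_sub ((2 : ℝ) • y k) (w k)]
  obtain ⟨hxy, hgap⟩ := tendsto_inertialDR_residuals hg hγ hv hα hαbar hllo hlam hlhi
    (fun k hk => hy k hk ▸ hproxg _) hw hsum fun k hk => nonneg_of_mul_nonneg_right
      (by exact_mod_cast (hφnonneg _ (norm_nonneg _)).trans (hφx k hk)) (inv_pos.2 hγ)
  have hxz : Tendsto (fun k => ‖x k - z‖) atTop (𝓝 0) :=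
    tendsto_zero_of_forcing_le hφmono hφnonneg hφvanish (fun k => norm_nonneg _)
      ((eventually_ge_atTop 1).mono hφx) (by simpa using hgap.const_mul γ⁻¹)
  have hz : z ∈ {a : H | ∃ u ∈ subdiff f a, ∃ v ∈ subdiff g a, u + v = 0} := ⟨-v, hu, v, hv, huv⟩
  refine ⟨z, Set.eq_singleton_iff_unique_mem.2 ⟨hz, fun a ha =>
    subsingleton_zer_of_uniformlyMonotone hg.1 hg.2.1 hφnonneg hφvanish hunif ha hz⟩, ?_, hxz⟩
  refine squeeze_zero (fun k => norm_nonneg _) (fun k => ?_) (by simpa using hxy.add hxz)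
  rw [norm_sub_rev (x k) (y k)]
  exact norm_sub_le_norm_sub_add_norm_sub _ _ _

theorem inertial_DR_strong_convergence_of_uniformly_monotone
    {H : Type*} [NormedAddCommGroup H] [InnerProductSpace ℝ H] [CompleteSpace H]
    (f g : H → EReal) (hf : ProperConvexLSC f) (hg : ProperConvexLSC g)
    (γ : ℝ) (hγ : 0 < γ)
    (proxf proxg : H → H)
    (hproxf : ∀ c, IsProx γ f c (proxf c)) (hproxg : ∀ c, IsProx γ g c (proxg c))
    (hzer : ∃ x : H, ∃ u ∈ subdiff f x, ∃ v ∈ subdiff g x, u + v = 0)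
    (α lam : ℕ → ℝ) (αbar llo lhi : ℝ)
    (hα : ∀ k, 0 ≤ α k ∧ α k ≤ αbar) (hαbar : αbar < 1)
    (hllo : 0 < llo) (hlam : ∀ k, llo ≤ lam k ∧ lam k ≤ lhi) (hlhi : lhi < 2)
    (w y x : ℕ → H)
    (hy : ∀ k, 1 ≤ k → y k = proxg (w k + α k • (w k - w (k - 1))))
    (hx : ∀ k, 1 ≤ k → x k = proxf ((2 : ℝ) • y k - w k - α k • (w k - w (k - 1))))
    (hw : ∀ k, 1 ≤ k → w (k + 1) = w k + α k • (w k - w (k - 1)) + lam k • (x k - y k))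
    (hsum : Summable fun k => α (k + 1) * ‖w (k + 1) - w k‖ ^ 2)
    (φ : ℝ → EReal) (hφmono : MonotoneOn φ (Set.Ici 0))
    (hφ0 : φ 0 = 0) (hφnonneg : ∀ t, 0 ≤ t → 0 ≤ φ t)
    (hφvanish : ∀ t, 0 ≤ t → φ t = 0 → t = 0)
    (hunif : ∀ a b u v : H, u ∈ subdiff f a → v ∈ subdiff f b →
      φ ‖a - b‖ ≤ ((⟪a - b, u - v⟫ : ℝ) : EReal)) :
    ∃ z : H,
      {a : H | ∃ u ∈ subdiff f a, ∃ v ∈ subdiff g a, u + v = 0} = {z} ∧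
      Tendsto (fun k => ‖y k - z‖) atTop (𝓝 0) ∧
      Tendsto (fun k => ‖x k - z‖) atTop (𝓝 0) :=
  inertial_DR_strong_convergence_of_uniformly_monotone_general f g hf hg γ hγ proxf proxg hproxf
    hproxg hzer α lam αbar llo lhi hα hαbar hllo hlam hlhi w y x hy hx hw hsum φ hφmono hφnonneg
    hφvanish hunif
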